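/- arXiv:1112.1663 — 3 statements merged into one kernel-verified Lean document; each statement's English description precedes it below -/
import Mathlib

section
/- Let d ≥ 1, ν > 0, β ∈ (0,1/2], α ∈ (1/2,1) with α + β > 1, and set θ = 2(α+β−1) ∈ (0,1). Let a : ℝ^d → ℝ be continuous, bounded, integrable and positive with a(0) > 0; put R̂₀(p) = a(p)/|p|^{d+2(α−1)}, 𝔤(p) = ν|p|^{2β}, and define the autocorrelation function R(t,x) = (2π)^{−d} ∫_{ℝ^d} e^{−𝔤(p)|t|} R̂₀(p) cos(p·x) dp for t ∈ ℝ, x ∈ ℝ^d. Then for every x ∈ ℝ^d one has ∫_0^∞ |R(t,x)| dt = +∞. -/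
open MeasureTheory Real Set Metric Module
open scoped ENNReal RealInnerProductSpace

/-!
Near `p = 0` the cosine is close to `1` and `a` is close to `a 0 > 0`, so the part of the
integral over a small ball `|p| < δ` is bounded below by a multiple of
`∫_{|p|<δ} e^{-ν|p|^{2β} t} |p|^{-(d+2α-2)} dp`, while the part over `|p| ≥ δ` is at most
`e^{-ν δ^{2β} t} ‖R̂₀‖₁`, which is integrable in `t`. Integrating the main part in `t` first
(Tonelli) leaves `ν⁻¹ ∫_{|p|<δ} |p|^{-(d+2(α+β-1))} dp`, which diverges since `α + β > 1`.
-/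

theorem lintegral_ofReal_eq_top_of_le_add {X : Type*} [MeasurableSpace X] {μ : Measure X}
    {f g h : X → ℝ} (hf : ∫⁻ x, ENNReal.ofReal (f x) ∂μ = ⊤) (hh : Integrable h μ)
    (hfgh : ∀ᵐ x ∂μ, f x ≤ g x + h x) :
    ∫⁻ x, ENNReal.ofReal (g x) ∂μ = ⊤ := by
  have hle : ∫⁻ x, ENNReal.ofReal (f x) ∂μ ≤
      ∫⁻ x, ENNReal.ofReal (g x) ∂μ + ∫⁻ x, ENNReal.ofReal (h x) ∂μ := by
    rw [← lintegral_add_right' _ hh.1.aemeasurable.ennreal_ofReal]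
    refine lintegral_mono_ae (hfgh.mono fun x hx ↦ ?_)
    exact (ENNReal.ofReal_le_ofReal hx).trans ENNReal.ofReal_add_le
  rw [hf, top_le_iff, ENNReal.add_eq_top] at hle
  exact hle.resolve_right hh.lintegral_lt_top.ne

theorem lintegral_Ioi_exp_neg_mul {b : ℝ} (hb : 0 < b) :
    ∫⁻ t in Ioi 0, ENNReal.ofReal (exp (-b * t)) = ENNReal.ofReal b⁻¹ := by
  rw [← ofReal_integral_eq_lintegral_ofReal (integrableOn_exp_mul_Ioi (neg_lt_zero.2 hb) 0)
    (ae_of_all _ fun t ↦ (exp_pos _).le), integral_exp_mul_Ioi (neg_lt_zero.2 hb)]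
  simp only [mul_zero, exp_zero]
  rw [div_neg, neg_div, neg_neg, one_div]

section RadialPower

variable {E : Type*} [NormedAddCommGroup E] [NormedSpace ℝ E] [FiniteDimensional ℝ E]
  [MeasurableSpace E] [BorelSpace E] {μ : Measure E} [μ.IsAddHaarMeasure]

theorem not_integrableOn_ball_norm_rpow_neg [Nontrivial E] {s r : ℝ}
    (hs : (finrank ℝ E : ℝ) ≤ s) (hr : 0 < r) :
    ¬ IntegrableOn (fun x : E ↦ ‖x‖ ^ (-s)) (ball 0 r) μ := by
  rw [integrableOn_fun_norm_addHaar μ (f := fun y ↦ y ^ (-s)),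
    integrableOn_congr_fun (g := fun y ↦ y ^ ((finrank ℝ E : ℝ) - 1 - s)) _ measurableSet_Ioo,
    intervalIntegral.integrableOn_Ioo_rpow_iff hr]
  · linarith
  · intro y hy
    have hd : 1 ≤ finrank ℝ E := finrank_pos
    simp only [smul_eq_mul]
    rw [← rpow_natCast, ← rpow_add hy.1, Nat.cast_sub hd]
    norm_num [sub_eq_add_neg]

theorem lintegral_ball_norm_rpow_neg_eq_top [Nontrivial E] {s r : ℝ}
    (hs : (finrank ℝ E : ℝ) ≤ s) (hr : 0 < r) :
    ∫⁻ x in ball 0 r, ENNReal.ofReal (‖x‖ ^ (-s)) ∂μ = ⊤ := by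
  by_contra h
  exact not_integrableOn_ball_norm_rpow_neg (μ := μ) hs hr
    ((lintegral_ofReal_ne_top_iff_integrable (measurable_norm.pow_const _).aestronglyMeasurable
      (ae_of_all _ fun x ↦ by positivity)).1 h)

theorem integrable_div_norm_rpow {a : E → ℝ} {e : ℝ} (ha_cont : Continuous a)
    (ha_int : Integrable a μ) (he0 : 0 ≤ e) (hed : e < finrank ℝ E) :
    Integrable (fun p ↦ a p / ‖p‖ ^ e) μ := by
  have hd : 1 ≤ finrank ℝ E := by exact_mod_cast (he0.trans_lt hed : (0 : ℝ) < _)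
  have hmeas : AEStronglyMeasurable (fun p ↦ a p / ‖p‖ ^ e) μ :=
    (ha_cont.measurable.div (measurable_norm.pow_const e)).aestronglyMeasurable
  rw [← integrableOn_univ, ← union_compl_self (ball (0 : E) 1)]
  refine IntegrableOn.union ?_ ?_
  · obtain ⟨M, hM⟩ := (isCompact_closedBall (0 : E) 1).exists_bound_of_continuousOn
      ha_cont.continuousOn
    refine integrableOn_ball_of_norm_le_rpow (C := M) hd hed ?_ hmeas
    filter_upwards [ae_restrict_mem measurableSet_ball] with p hp
    rw [norm_div, Real.norm_of_nonneg (rpow_nonneg (norm_nonneg p) e), div_eq_mul_inv,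
      ← rpow_neg (norm_nonneg p)]
    exact mul_le_mul_of_nonneg_right (hM p (ball_subset_closedBall hp)) (by positivity)
  · refine Integrable.mono ha_int.integrableOn hmeas.restrict ?_
    filter_upwards [ae_restrict_mem measurableSet_ball.compl] with p hp
    have hp1 : 1 ≤ ‖p‖ := by simpa using hp
    rw [norm_div, Real.norm_of_nonneg (rpow_nonneg (norm_nonneg p) e)]
    exact div_le_self (norm_nonneg _) (one_le_rpow hp1 he0)

theorem lintegral_Ioi_setIntegral_ball_exp_rpow_eq_top [Nontrivial E] {ν β e δ : ℝ} (hν : 0 < ν)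
    (hed : e < finrank ℝ E) (hs : (finrank ℝ E : ℝ) ≤ e + 2 * β) (hδ : 0 < δ) :
    ∫⁻ t in Ioi 0, ENNReal.ofReal
      (∫ p in ball 0 δ, exp (-(ν * ‖p‖ ^ (2 * β)) * t) * ‖p‖ ^ (-e) ∂μ) = ⊤ := by
  set G : ℝ → E → ℝ := fun t p ↦ exp (-(ν * ‖p‖ ^ (2 * β)) * t) * ‖p‖ ^ (-e)
  have hG : ∀ t, 0 ≤ t → IntegrableOn (G t) (ball 0 δ) μ := fun t ht ↦ by
    refine integrableOn_ball_of_norm_le_rpow (C := 1) finrank_pos hed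
      (ae_of_all _ fun p ↦ ?_) (Measurable.aestronglyMeasurable (by fun_prop))
    rw [norm_mul, norm_of_nonneg (exp_pos _).le, norm_of_nonneg (by positivity)]
    refine mul_le_mul_of_nonneg_right (exp_le_one_iff.2 ?_) (by positivity)
    exact mul_nonpos_of_nonpos_of_nonneg (neg_nonpos.2 (by positivity)) ht
  have hs0 : e + 2 * β ≠ 0 := by
    have : (1 : ℝ) ≤ finrank ℝ E := by exact_mod_cast finrank_pos
    linarith
  have hinner : ∀ p : E, ENNReal.ofReal (ν⁻¹ * ‖p‖ ^ (-(e + 2 * β))) ≤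
      ∫⁻ t in Ioi 0, ENNReal.ofReal (G t p) := fun p ↦ by
    rcases eq_or_ne p 0 with rfl | hp
    · rw [norm_zero, zero_rpow (neg_ne_zero.2 hs0), mul_zero, ENNReal.ofReal_zero]
      exact bot_le
    have hpn : 0 < ‖p‖ := norm_pos_iff.2 hp
    simp only [G, ENNReal.ofReal_mul (exp_pos _).le]
    rw [lintegral_mul_const' _ _ ENNReal.ofReal_ne_top, lintegral_Ioi_exp_neg_mul (by positivity),
      ← ENNReal.ofReal_mul (by positivity), mul_inv, neg_add, rpow_add hpn, rpow_neg hpn.le (2 * β)]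
    exact (by ring_nf : _ = _).le
  rw [eq_top_iff]
  calc ⊤ = ENNReal.ofReal ν⁻¹ * ∫⁻ p in ball 0 δ, ENNReal.ofReal (‖p‖ ^ (-(e + 2 * β))) ∂μ := by
        rw [lintegral_ball_norm_rpow_neg_eq_top hs hδ, ENNReal.mul_top (by simpa using hν)]
    _ = ∫⁻ p in ball 0 δ, ENNReal.ofReal (ν⁻¹ * ‖p‖ ^ (-(e + 2 * β))) ∂μ := by
        rw [← lintegral_const_mul' _ _ ENNReal.ofReal_ne_top]
        simp_rw [ENNReal.ofReal_mul (inv_nonneg.2 hν.le)]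
    _ ≤ ∫⁻ p in ball 0 δ, (∫⁻ t in Ioi 0, ENNReal.ofReal (G t p)) ∂μ := lintegral_mono hinner
    _ = ∫⁻ t in Ioi 0, ∫⁻ p in ball 0 δ, ENNReal.ofReal (G t p) ∂μ :=
        lintegral_lintegral_swap (Measurable.aemeasurable (by fun_prop))
    _ = _ := setLIntegral_congr_fun measurableSet_Ioi fun t ht ↦
        (ofReal_integral_eq_lintegral_ofReal (hG t (le_of_lt ht))
          (ae_of_all _ fun p ↦ by positivity)).symm

end RadialPower

section Spectral

variable {E : Type*} [NormedAddCommGroup E] [InnerProductSpace ℝ E]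
  [MeasurableSpace E] [BorelSpace E] {μ : Measure E}

theorem mul_setIntegral_ball_le_integral_add {a : E → ℝ} {x : E} {ν β e δ m t : ℝ}
    (hν : 0 ≤ ν) (hβ : 0 ≤ β) (hδ : 0 ≤ δ) (hm : 0 ≤ m) (ht : 0 ≤ t)
    (hK : Integrable (fun p ↦ a p / ‖p‖ ^ e) μ)
    (hball : ∀ p ∈ ball (0 : E) δ, m ≤ a p ∧ 1 / 2 ≤ cos ⟪p, x⟫) :
    m / 2 * ∫ p in ball 0 δ, exp (-(ν * ‖p‖ ^ (2 * β)) * t) * ‖p‖ ^ (-e) ∂μ ≤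
      (∫ p, exp (-(ν * ‖p‖ ^ (2 * β)) * t) * (a p / ‖p‖ ^ e) * cos ⟪p, x⟫ ∂μ) +
        exp (-(ν * δ ^ (2 * β)) * t) * ∫ p, ‖a p / ‖p‖ ^ e‖ ∂μ := by
  set F := fun p ↦ exp (-(ν * ‖p‖ ^ (2 * β)) * t) * (a p / ‖p‖ ^ e) * cos ⟪p, x⟫
  have hF_le : ∀ p, ‖F p‖ ≤ exp (-(ν * ‖p‖ ^ (2 * β)) * t) * ‖a p / ‖p‖ ^ e‖ := fun p ↦ by
    rw [norm_mul, norm_mul, norm_of_nonneg (exp_pos _).le]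
    exact mul_le_of_le_one_right (by positivity) (abs_cos_le_one _)
  have hF : Integrable F μ := by
    refine hK.mono (((Measurable.aestronglyMeasurable (by fun_prop)).mul hK.1).mul
      (by fun_prop)) (ae_of_all _ fun p ↦ (hF_le p).trans ?_)
    refine mul_le_of_le_one_left (norm_nonneg _) (exp_le_one_iff.2 ?_)
    exact mul_nonpos_of_nonpos_of_nonneg (neg_nonpos.2 (by positivity)) ht
  have hnear : m / 2 * ∫ p in ball 0 δ, exp (-(ν * ‖p‖ ^ (2 * β)) * t) * ‖p‖ ^ (-e) ∂μ ≤
      ∫ p in ball 0 δ, F p ∂μ := by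
    rw [← integral_const_mul]
    refine integral_mono_of_nonneg (ae_of_all _ fun p ↦ by positivity) hF.integrableOn ?_
    filter_upwards [ae_restrict_mem measurableSet_ball] with p hp
    obtain ⟨ha, hcos⟩ := hball p hp
    calc m / 2 * (exp (-(ν * ‖p‖ ^ (2 * β)) * t) * ‖p‖ ^ (-e))
        = exp (-(ν * ‖p‖ ^ (2 * β)) * t) * (m * ‖p‖ ^ (-e)) * (1 / 2) := by ring
      _ ≤ exp (-(ν * ‖p‖ ^ (2 * β)) * t) * (a p * ‖p‖ ^ (-e)) * cos ⟪p, x⟫ := by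
        have hap : 0 ≤ a p := hm.trans ha
        gcongr
      _ = F p := by rw [rpow_neg (norm_nonneg p), ← div_eq_mul_inv]
  have hfar : |∫ p in (ball 0 δ)ᶜ, F p ∂μ| ≤
      exp (-(ν * δ ^ (2 * β)) * t) * ∫ p, ‖a p / ‖p‖ ^ e‖ ∂μ := by
    rw [← integral_const_mul]
    calc |∫ p in (ball 0 δ)ᶜ, F p ∂μ|
        ≤ ∫ p in (ball 0 δ)ᶜ, exp (-(ν * δ ^ (2 * β)) * t) * ‖a p / ‖p‖ ^ e‖ ∂μ := by
          rw [← Real.norm_eq_abs]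
          refine norm_integral_le_of_norm_le (hK.norm.const_mul _).integrableOn ?_
          filter_upwards [ae_restrict_mem measurableSet_ball.compl] with p hp
          have hδp : δ ≤ ‖p‖ := by simpa using hp
          refine (hF_le p).trans (mul_le_mul_of_nonneg_right ?_ (norm_nonneg _))
          gcongr
      _ ≤ ∫ p, exp (-(ν * δ ^ (2 * β)) * t) * ‖a p / ‖p‖ ^ e‖ ∂μ :=
          setIntegral_le_integral (hK.norm.const_mul _) (ae_of_all _ fun p ↦ by positivity)
  rw [← integral_add_compl (s := ball 0 δ) measurableSet_ball hF]
  linarith [neg_abs_le (∫ p in (ball 0 δ)ᶜ, F p ∂μ)]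

end Spectral

theorem stmt1_general (d : ℕ) (hd : 1 ≤ d) (ν β α : ℝ) (hν : 0 < ν)
    (hβ : β ∈ Set.Ioc (0 : ℝ) (1 / 2)) (hα : α ∈ Set.Ioo (1 / 2 : ℝ) 1)
    (hαβ : 1 < α + β)
    (a : EuclideanSpace ℝ (Fin d) → ℝ) (ha_cont : Continuous a)
    (ha_int : Integrable a) (ha0 : 0 < a 0)
    (R : ℝ → EuclideanSpace ℝ (Fin d) → ℝ)
    (hR : ∀ t x, R t x = (2 * π) ^ (-(d : ℝ)) *
      ∫ p : EuclideanSpace ℝ (Fin d),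
        Real.exp (-(ν * ‖p‖ ^ (2 * β)) * |t|) *
          (a p / ‖p‖ ^ ((d : ℝ) + 2 * (α - 1))) * Real.cos ⟪p, x⟫) :
    ∀ x : EuclideanSpace ℝ (Fin d),
      (∫⁻ t in Set.Ioi (0 : ℝ), ENNReal.ofReal |R t x|) = ⊤ := by
  intro x
  have : Nontrivial (EuclideanSpace ℝ (Fin d)) :=
    Module.nontrivial_of_finrank_pos (R := ℝ) (by rw [finrank_euclideanSpace_fin]; omega)
  have hdim : (finrank ℝ (EuclideanSpace ℝ (Fin d)) : ℝ) = d := by simp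
  have hd' : (1 : ℝ) ≤ d := by exact_mod_cast hd
  set e : ℝ := d + 2 * (α - 1)
  have hK := integrable_div_norm_rpow (e := e) ha_cont ha_int (by linarith [hα.1])
    (by rw [hdim]; linarith [hα.2])
  obtain ⟨δ, hδ, hball⟩ : ∃ δ > 0, ∀ p ∈ ball (0 : EuclideanSpace ℝ (Fin d)) δ,
      a 0 / 2 < a p ∧ 1 / 2 < cos ⟪p, x⟫ :=
    eventually_nhds_iff_ball.1 <|
      (ha_cont.continuousAt.eventually (lt_mem_nhds (half_lt_self ha0))).and
      ((continuous_cos.comp (continuous_id.inner continuous_const)).continuousAt.eventually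
        (lt_mem_nhds (by norm_num)))
  set c : ℝ := (2 * π) ^ (-(d : ℝ))
  have hc : 0 < c := by positivity
  refine lintegral_ofReal_eq_top_of_le_add
    (f := fun t ↦ c * (a 0 / 2 / 2) *
      ∫ p in ball (0 : EuclideanSpace ℝ (Fin d)) δ, exp (-(ν * ‖p‖ ^ (2 * β)) * t) * ‖p‖ ^ (-e))
    (h := fun t ↦ c * (exp (-(ν * δ ^ (2 * β)) * t) * ∫ p, ‖a p / ‖p‖ ^ e‖)) ?_ ?_ ?_
  · rw [lintegral_congr fun t ↦ ENNReal.ofReal_mul (by positivity),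
      lintegral_const_mul' _ _ ENNReal.ofReal_ne_top,
      lintegral_Ioi_setIntegral_ball_exp_rpow_eq_top hν (by rw [hdim]; linarith [hα.2])
        (by rw [hdim]; linarith) hδ]
    exact ENNReal.mul_top (by simp; positivity)
  · exact ((integrableOn_exp_mul_Ioi (neg_lt_zero.2 (by positivity)) 0).mul_const _).const_mul _
  · filter_upwards [ae_restrict_mem measurableSet_Ioi] with t ht
    have hlow := mul_setIntegral_ball_le_integral_add (x := x) hν.le hβ.1.le hδ.le
      (by positivity) ht.le hK fun p hp ↦ ⟨(hball p hp).1.le, (hball p hp).2.le⟩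
    rw [hR, abs_of_pos (a := t) ht]
    linarith [mul_le_mul_of_nonneg_left hlow hc.le, le_abs_self (c *
      ∫ p, exp (-(ν * ‖p‖ ^ (2 * β)) * t) * (a p / ‖p‖ ^ e) * cos ⟪p, x⟫)]

/-- For the long-range spectral data `𝔤(p) = ν|p|^{2β}`,
`R̂₀(p) = a(p)/|p|^{d+2(α−1)}` with `a` continuous, bounded, integrable, positive, `a 0 > 0`,
`β ∈ (0,1/2]`, `α ∈ (1/2,1)`, `α+β > 1`, the autocorrelation function
`R(t,x) = (2π)^{−d} ∫ e^{−𝔤(p)|t|} R̂₀(p) cos(p·x) dp` satisfies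
`∫₀^∞ |R(t,x)| dt = +∞` for every `x`. -/
theorem stmt1 (d : ℕ) (hd : 1 ≤ d) (ν β α θ : ℝ) (hν : 0 < ν)
    (hβ : β ∈ Set.Ioc (0 : ℝ) (1 / 2)) (hα : α ∈ Set.Ioo (1 / 2 : ℝ) 1)
    (hαβ : 1 < α + β) (hθ : θ = 2 * (α + β - 1))
    (a : EuclideanSpace ℝ (Fin d) → ℝ) (ha_cont : Continuous a)
    (ha_bdd : ∃ M : ℝ, ∀ p, a p ≤ M) (ha_int : Integrable a)
    (ha_pos : ∀ p, 0 < a p) (ha0 : 0 < a 0)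
    (R : ℝ → EuclideanSpace ℝ (Fin d) → ℝ)
    (hR : ∀ t x, R t x = (2 * π) ^ (-(d : ℝ)) *
      ∫ p : EuclideanSpace ℝ (Fin d),
        Real.exp (-(ν * ‖p‖ ^ (2 * β)) * |t|) *
          (a p / ‖p‖ ^ ((d : ℝ) + 2 * (α - 1))) * Real.cos ⟪p, x⟫) :
    ∀ x : EuclideanSpace ℝ (Fin d),
      (∫⁻ t in Set.Ioi (0 : ℝ), ENNReal.ofReal |R t x|) = ⊤ :=
  stmt1_general d hd ν β α hν hβ hα hαβ a ha_cont ha_int ha0 R hR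
end

section
/- Let d ≥ 1, δ ∈ (0,2), and let λ : ℝ^d → ℝ be a bounded C¹ function with bounded gradient. Then for every ε ∈ (0,1] and every k ∈ ℝ^d, ∫_{ℝ^d} |p|^{−(d+δ)} (λ(k − p/(2ε)) − λ(k + p/(2ε)))² dp ≤ ε^{−δ} ( ‖∇λ‖_∞² ∫_{|p|≤1} |p|^{2−d−δ} dp + 4‖λ‖_∞² ∫_{|p|>1} |p|^{−(d+δ)} dp ), and in particular the left-hand side is finite. -/
/-!
Substituting `p = ε x` turns the weight `‖p‖ ^ (-(d + δ))` and Lebesgue measure into the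
factor `ε ^ (-δ)`, leaving the integral at scale `ε = 1`. That integral is split at `‖x‖ = 1`:
near the origin the mean value theorem bounds the squared symmetric difference by
`‖∇λ‖² ‖x‖²`, which lowers the singularity to `‖x‖ ^ (2 - d - δ)`, integrable since `δ < 2`;
away from the origin the difference is at most `2 ‖λ‖_∞` and `‖x‖ ^ (-(d + δ))` is integrable at
infinity since `δ > 0`.
-/

open MeasureTheory Real Set
open scoped ENNReal

lemma sq_sub_le_of_abs_le {α : Type*} {f : α → ℝ} {C : ℝ} (hC : ∀ x, |f x| ≤ C) (x y : α) :
    (f x - f y) ^ 2 ≤ 4 * C ^ 2 := by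
  have hxy : |f x - f y| ≤ 2 * C := by linarith [abs_sub (f x) (f y), hC x, hC y]
  nlinarith [sq_abs (f x - f y), abs_nonneg (f x - f y)]

section Pointwise

variable {E : Type*} [NormedAddCommGroup E] [NormedSpace ℝ E] {f : E → ℝ} {C : ℝ}

lemma sq_sub_symm_le_of_norm_fderiv_le (hf : Differentiable ℝ f) (hC : ∀ x, ‖fderiv ℝ f x‖ ≤ C)
    (k x : E) : (f (k - (2 : ℝ)⁻¹ • x) - f (k + (2 : ℝ)⁻¹ • x)) ^ 2 ≤ C ^ 2 * ‖x‖ ^ 2 := by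
  have hlip := convex_univ.norm_image_sub_le_of_norm_fderiv_le (fun z _ ↦ hf z) (fun z _ ↦ hC z)
    (mem_univ (k + (2 : ℝ)⁻¹ • x)) (mem_univ (k - (2 : ℝ)⁻¹ • x))
  rw [show k - (2 : ℝ)⁻¹ • x - (k + (2 : ℝ)⁻¹ • x) = -x by module, norm_neg,
    Real.norm_eq_abs] at hlip
  rw [← sq_abs, ← mul_pow]
  exact pow_le_pow_left₀ (abs_nonneg _) hlip 2

lemma norm_rpow_mul_sq_sub_symm_le_of_norm_fderiv_le (hf : Differentiable ℝ f)
    (hC : ∀ x, ‖fderiv ℝ f x‖ ≤ C) (a : ℝ) (k x : E) :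
    ‖x‖ ^ a * (f (k - (2 : ℝ)⁻¹ • x) - f (k + (2 : ℝ)⁻¹ • x)) ^ 2 ≤ C ^ 2 * ‖x‖ ^ (a + 2) :=
  calc _ ≤ ‖x‖ ^ a * (C ^ 2 * ‖x‖ ^ (2 : ℝ)) := by
        rw [rpow_two]
        gcongr
        exact sq_sub_symm_le_of_norm_fderiv_le hf hC k x
    _ = C ^ 2 * (‖x‖ ^ a * ‖x‖ ^ (2 : ℝ)) := by ring
    _ ≤ C ^ 2 * ‖x‖ ^ (a + 2) := by
        gcongr
        exact le_rpow_add (norm_nonneg x) _ _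

end Pointwise

lemma lintegral_ofReal_le_setIntegral_add_setIntegral_compl {α : Type*} [MeasurableSpace α]
    {μ : Measure α} {f g h : α → ℝ} {s : Set α}
    (hs : MeasurableSet s) (hf : ∀ x, 0 ≤ f x) (hfg : ∀ x ∈ s, f x ≤ g x)
    (hfh : ∀ x ∈ sᶜ, f x ≤ h x) (hg : IntegrableOn g s μ) (hh : IntegrableOn h sᶜ μ) :
    ∫⁻ x, ENNReal.ofReal (f x) ∂μ ≤ ENNReal.ofReal ((∫ x in s, g x ∂μ) + ∫ x in sᶜ, h x ∂μ) := by
  have hg0 : 0 ≤ᵐ[μ.restrict s] g :=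
    (ae_restrict_mem hs).mono fun x hx ↦ (hf x).trans (hfg x hx)
  have hh0 : 0 ≤ᵐ[μ.restrict sᶜ] h :=
    (ae_restrict_mem hs.compl).mono fun x hx ↦ (hf x).trans (hfh x hx)
  rw [ENNReal.ofReal_add (integral_nonneg_of_ae hg0) (integral_nonneg_of_ae hh0),
    ofReal_integral_eq_lintegral_ofReal hg hg0, ofReal_integral_eq_lintegral_ofReal hh hh0,
    ← lintegral_add_compl _ hs]
  exact add_le_add
    (setLIntegral_mono' hs fun x hx ↦ ENNReal.ofReal_le_ofReal (hfg x hx))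
    (setLIntegral_mono' hs.compl fun x hx ↦ ENNReal.ofReal_le_ofReal (hfh x hx))

section Integrals

open Module

variable {E : Type*} [NormedAddCommGroup E] [NormedSpace ℝ E] [FiniteDimensional ℝ E]
  [MeasurableSpace E] [BorelSpace E] {μ : Measure E} [μ.IsAddHaarMeasure]

lemma integrableOn_norm_rpow_le_one (hdim : 1 ≤ finrank ℝ E) {s : ℝ}
    (hs : -(finrank ℝ E : ℝ) < s) : IntegrableOn (fun x : E ↦ ‖x‖ ^ s) {x | ‖x‖ ≤ 1} μ := by
  have hloc : LocallyIntegrable (fun x : E ↦ ‖x‖ ^ s) μ :=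
    locallyIntegrable_of_norm_le_rpow hdim (C := 1) (α := -s) (by linarith)
      (.of_forall fun x ↦ by simp [abs_of_nonneg (rpow_nonneg (norm_nonneg x) s)])
      (by fun_prop : Measurable fun x : E ↦ ‖x‖ ^ s).aestronglyMeasurable
  simpa [Metric.closedBall, dist_zero_right] using
    hloc.integrableOn_isCompact (isCompact_closedBall (0 : E) 1)

lemma integrableOn_norm_rpow_one_lt {s : ℝ} (hs : s < -(finrank ℝ E : ℝ)) :
    IntegrableOn (fun x : E ↦ ‖x‖ ^ s) {x | 1 < ‖x‖} μ := by
  have hdom : Integrable (fun x : E ↦ 2 ^ (-s) * (1 + ‖x‖) ^ (-(-s))) μ :=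
    (integrable_one_add_norm (by linarith)).const_mul _
  refine hdom.integrableOn.mono'
    (by fun_prop : Measurable fun x : E ↦ ‖x‖ ^ s).aestronglyMeasurable ?_
  filter_upwards [ae_restrict_mem (measurableSet_lt measurable_const measurable_norm)]
    with x (hx : 1 < ‖x‖)
  rw [norm_of_nonneg (rpow_nonneg (norm_nonneg x) s), neg_neg]
  calc ‖x‖ ^ s = 2 ^ (-s) * (2 * ‖x‖) ^ s := by
        rw [mul_rpow zero_le_two (norm_nonneg x), ← mul_assoc, ← rpow_add zero_lt_two,
          neg_add_cancel, rpow_zero, one_mul]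
    _ ≤ 2 ^ (-s) * (1 + ‖x‖) ^ s := by
        have : (2 * ‖x‖) ^ s ≤ (1 + ‖x‖) ^ s :=
          rpow_le_rpow_of_nonpos (by positivity) (by linarith) (by linarith)
        gcongr

lemma lintegral_norm_rpow_mul_comp_inv_smul (g : E → ℝ) (a : ℝ) {ε : ℝ} (hε : 0 < ε) :
    ∫⁻ x, ENNReal.ofReal (‖x‖ ^ a * g (ε⁻¹ • x)) ∂μ =
      ENNReal.ofReal (ε ^ (a + finrank ℝ E)) * ∫⁻ y, ENNReal.ofReal (‖y‖ ^ a * g y) ∂μ := by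
  have hmap : Measure.map (ε⁻¹ • ·) μ = ENNReal.ofReal (ε ^ finrank ℝ E) • μ := by
    simp only [Measure.map_addHaar_smul μ (inv_ne_zero hε.ne'), inv_pow, inv_inv,
      abs_of_pos (pow_pos hε _)]
  calc ∫⁻ x, ENNReal.ofReal (‖x‖ ^ a * g (ε⁻¹ • x)) ∂μ
      = ∫⁻ x, ENNReal.ofReal (‖ε • ε⁻¹ • x‖ ^ a * g (ε⁻¹ • x)) ∂μ := by
        simp only [smul_inv_smul₀ hε.ne']
    _ = ∫⁻ y, ENNReal.ofReal (‖ε • y‖ ^ a * g y) ∂(Measure.map (ε⁻¹ • ·) μ) :=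
        ((measurableEmbedding_const_smul₀ (inv_ne_zero hε.ne')).lintegral_map
          fun y ↦ ENNReal.ofReal (‖ε • y‖ ^ a * g y)).symm
    _ = ENNReal.ofReal (ε ^ finrank ℝ E) * ∫⁻ y, ENNReal.ofReal (ε ^ a) *
          ENNReal.ofReal (‖y‖ ^ a * g y) ∂μ := by
        simp only [hmap, lintegral_smul_measure, smul_eq_mul, norm_smul, norm_of_nonneg hε.le,
          mul_rpow hε.le (norm_nonneg _), mul_assoc, ENNReal.ofReal_mul (rpow_nonneg hε.le a)]
    _ = ENNReal.ofReal (ε ^ (a + finrank ℝ E)) * ∫⁻ y, ENNReal.ofReal (‖y‖ ^ a * g y) ∂μ := by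
        rw [lintegral_const_mul' _ _ ENNReal.ofReal_ne_top, ← mul_assoc,
          ← ENNReal.ofReal_mul (by positivity), ← rpow_natCast, ← rpow_add hε, add_comm]

end Integrals

/-- Scaling estimate for singular weights applied to symmetric differences:
if `λ : ℝ^d → ℝ` is a bounded `C¹` function with bounded gradient (`|λ| ≤ Cλ`,
`‖∇λ‖ ≤ C∇` pointwise), `δ ∈ (0,2)` and `ε ∈ (0,1]`, then for every `k`,
`∫ |p|^{−(d+δ)} (λ(k − p/(2ε)) − λ(k + p/(2ε)))² dp
  ≤ ε^{−δ} (C∇² ∫_{|p|≤1} |p|^{2−d−δ} dp + 4 Cλ² ∫_{|p|>1} |p|^{−(d+δ)} dp)`,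
and in particular the left-hand side is finite. -/
theorem stmt7 (d : ℕ) (hd : 1 ≤ d) (δ : ℝ) (hδ : δ ∈ Set.Ioo (0 : ℝ) 2)
    (lam : EuclideanSpace ℝ (Fin d) → ℝ) (hlam : ContDiff ℝ 1 lam)
    (Cl Cg : ℝ) (hCl : ∀ x, |lam x| ≤ Cl) (hCg : ∀ x, ‖fderiv ℝ lam x‖ ≤ Cg)
    (ε : ℝ) (hε : ε ∈ Set.Ioc (0 : ℝ) 1) (k : EuclideanSpace ℝ (Fin d)) :
    (∫⁻ p : EuclideanSpace ℝ (Fin d),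
        ENNReal.ofReal (‖p‖ ^ (-((d : ℝ) + δ)) *
          (lam (k - (2 * ε)⁻¹ • p) - lam (k + (2 * ε)⁻¹ • p)) ^ 2)) ≤
      ENNReal.ofReal (ε ^ (-δ) *
        (Cg ^ 2 * (∫ p in {p : EuclideanSpace ℝ (Fin d) | ‖p‖ ≤ 1},
            ‖p‖ ^ (2 - (d : ℝ) - δ)) +
          4 * Cl ^ 2 * ∫ p in {p : EuclideanSpace ℝ (Fin d) | 1 < ‖p‖},
            ‖p‖ ^ (-((d : ℝ) + δ)))) ∧
    (∫⁻ p : EuclideanSpace ℝ (Fin d),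
        ENNReal.ofReal (‖p‖ ^ (-((d : ℝ) + δ)) *
          (lam (k - (2 * ε)⁻¹ • p) - lam (k + (2 * ε)⁻¹ • p)) ^ 2)) < ⊤ := by
  obtain ⟨hδ0, hδ2⟩ := hδ
  have hscale := lintegral_norm_rpow_mul_comp_inv_smul (μ := volume)
    (fun y ↦ (lam (k - (2 : ℝ)⁻¹ • y) - lam (k + (2 : ℝ)⁻¹ • y)) ^ 2) (-((d : ℝ) + δ)) hε.1
  simp only [smul_smul, ← mul_inv, finrank_euclideanSpace_fin,
    show -((d : ℝ) + δ) + d = -δ by ring] at hscale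
  have hball : {p : EuclideanSpace ℝ (Fin d) | ‖p‖ ≤ 1}ᶜ = {p | 1 < ‖p‖} := by
    ext; simp
  refine ⟨?bound, (?bound).trans_lt ENNReal.ofReal_lt_top⟩
  rw [hscale, ENNReal.ofReal_mul (rpow_nonneg hε.1.le _), ← hball, ← integral_const_mul,
    ← integral_const_mul]
  gcongr
  refine lintegral_ofReal_le_setIntegral_add_setIntegral_compl
    (measurableSet_le measurable_norm measurable_const) (fun x ↦ by positivity) ?_ ?_ ?_ ?_
  · intro x _
    convert norm_rpow_mul_sq_sub_symm_le_of_norm_fderiv_le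
      (hlam.differentiable one_ne_zero) hCg _ k x using 3
    ring
  · intro x _
    rw [mul_comm]
    gcongr
    exact sq_sub_le_of_abs_le hCl _ _
  · refine (integrableOn_norm_rpow_le_one ?_ ?_).const_mul _ <;>
      simp only [finrank_euclideanSpace_fin] <;> linarith
  · rw [hball]
    refine (integrableOn_norm_rpow_one_lt ?_).const_mul _
    simp only [finrank_euclideanSpace_fin]
    linarith
end

section
/- Let d ≥ 1, θ ∈ (0,1), and let a : ℝ^d → [0,∞) be bounded and continuous with a(0) > 0. Define σ̃(p) = 2a(p)/((2π)^d |p|^{d+θ}) and Ψ(q) = ∫_{ℝ^d} σ̃(p) (cos(p·q) − 1) dp. Then there exists a constant c > 0 such that Ψ(q) ≤ −c |q|^θ for every q ∈ ℝ^d with |q| ≥ 1. -/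
/-!
The integrand `σ̃(p) (cos ⟪p, q⟫ - 1)` is nonpositive, so `Ψ(q)` is bounded above by its integral
over any set. Continuity of `a` at `0` gives `σ̃(p) ≳ ‖p‖ ^ (-(d + θ))` near the origin. On a ball
of radius `∼ 1 / ‖q‖` placed where `⟪p, q⟫ ∼ 1`, the factor `cos ⟪p, q⟫ - 1` stays below a
negative constant, `σ̃ ∼ ‖q‖ ^ (d + θ)`, and the volume is `∼ ‖q‖ ^ (-d)`; hence
`Ψ(q) ≲ -‖q‖ ^ θ`. The integral defining `Ψ` converges because the factor
`1 - cos ⟪p, q⟫ ≤ ‖p‖² ‖q‖² / 2` tames the singularity of `σ̃` at the origin, while `σ̃` decays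
faster than `‖p‖ ^ (-d)` at infinity.
-/

open MeasureTheory Real Set Metric Module
open scoped RealInnerProductSpace

noncomputable section

lemma integral_le_setIntegral_of_nonpos {α : Type*} [MeasurableSpace α] {μ : Measure α}
    {f : α → ℝ} (hf : Integrable f μ) (hf0 : ∀ᵐ x ∂μ, f x ≤ 0) (s : Set α) :
    ∫ x, f x ∂μ ≤ ∫ x in s, f x ∂μ := by
  have := setIntegral_le_integral (s := s) hf.neg (hf0.mono fun x hx ↦ neg_nonneg.2 hx)
  simpa only [Pi.neg_apply, integral_neg, neg_le_neg_iff] using this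

section NormedSpace

variable {E : Type*} [NormedAddCommGroup E] [NormedSpace ℝ E] [FiniteDimensional ℝ E]
  [MeasurableSpace E] [BorelSpace E] {μ : Measure E} [μ.IsAddHaarMeasure]

lemma integrableOn_compl_ball_rpow_neg {α r : ℝ} (hα : finrank ℝ E < α) (hr : 0 < r) :
    IntegrableOn (fun x : E ↦ ‖x‖ ^ (-α)) (ball 0 r)ᶜ μ := by
  have hα0 : 0 ≤ α := (Nat.cast_nonneg _).trans hα.le
  refine ((integrable_one_add_norm hα).const_mul ((r⁻¹ + 1) ^ α)).integrableOn.mono'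
    (by fun_prop : Measurable fun x : E ↦ ‖x‖ ^ (-α)).aestronglyMeasurable.restrict ?_
  filter_upwards [ae_restrict_mem measurableSet_ball.compl] with x hx
  have hrx : r ≤ ‖x‖ := by simpa using hx
  have hx0 : 0 < ‖x‖ := hr.trans_le hrx
  have hle : 1 + ‖x‖ ≤ (r⁻¹ + 1) * ‖x‖ := by
    have : 1 ≤ r⁻¹ * ‖x‖ := by rw [← div_eq_inv_mul, one_le_div hr]; exact hrx
    linarith
  calc ‖‖x‖ ^ (-α)‖ = (r⁻¹ + 1) ^ α * ((r⁻¹ + 1) * ‖x‖) ^ (-α) := by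
        rw [Real.norm_of_nonneg (by positivity), Real.mul_rpow (by positivity) hx0.le,
          Real.rpow_neg (x := r⁻¹ + 1) (by positivity)]
        field_simp
    _ ≤ (r⁻¹ + 1) ^ α * (1 + ‖x‖) ^ (-α) := mul_le_mul_of_nonneg_left
        (Real.rpow_le_rpow_of_nonpos (by positivity) hle (neg_nonpos.2 hα0)) (by positivity)

end NormedSpace

section InnerProductSpace

variable {E : Type*} [NormedAddCommGroup E] [InnerProductSpace ℝ E]

lemma abs_cos_inner_sub_one_le (p q : E) : |cos ⟪p, q⟫ - 1| ≤ ‖q‖ ^ 2 / 2 * ‖p‖ ^ 2 := by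
  have hcs : ⟪p, q⟫ ^ 2 ≤ (‖p‖ * ‖q‖) ^ 2 := sq_le_sq' (abs_le.1 (abs_real_inner_le_norm p q)).1
    (abs_le.1 (abs_real_inner_le_norm p q)).2
  rw [abs_of_nonpos (sub_nonpos.2 (cos_le_one _))]
  nlinarith [one_sub_sq_div_two_le_cos (x := ⟪p, q⟫)]

def probeBall (q : E) (t : ℝ) : Set E :=
  closedBall ((t / ‖q‖ ^ 2) • q) (t / (2 * ‖q‖))

lemma inner_mem_Icc_of_mem_probeBall {p q : E} (hq : q ≠ 0) {t : ℝ} (hp : p ∈ probeBall q t) :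
    t / 2 ≤ ⟪p, q⟫ ∧ ⟪p, q⟫ ≤ 3 * t / 2 := by
  have hq0 := norm_pos_iff.2 hq
  set c := (t / ‖q‖ ^ 2) • q
  have hc : ⟪c, q⟫ = t := by
    rw [real_inner_smul_left, real_inner_self_eq_norm_sq]; field_simp
  have hdev : |⟪p - c, q⟫| ≤ t / 2 := by
    calc |⟪p - c, q⟫| ≤ ‖p - c‖ * ‖q‖ := abs_real_inner_le_norm _ _
      _ ≤ t / (2 * ‖q‖) * ‖q‖ := by gcongr; exact mem_closedBall_iff_norm.1 hp
      _ = t / 2 := by field_simp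
  have hsplit : ⟪p, q⟫ = ⟪c, q⟫ + ⟪p - c, q⟫ := by rw [← inner_add_left, add_sub_cancel]
  constructor <;> linarith [abs_le.1 hdev]

lemma norm_le_of_mem_probeBall {p q : E} (hq : q ≠ 0) {t : ℝ} (ht : 0 ≤ t)
    (hp : p ∈ probeBall q t) : ‖p‖ ≤ 2 * t / ‖q‖ := by
  have hq0 := norm_pos_iff.2 hq
  calc ‖p‖ ≤ ‖(t / ‖q‖ ^ 2) • q‖ + t / (2 * ‖q‖) := norm_le_of_mem_closedBall hp
    _ = 3 / 2 * (t / ‖q‖) := by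
        rw [norm_smul, Real.norm_of_nonneg (by positivity)]; field_simp; ring
    _ ≤ 2 * t / ‖q‖ := by rw [mul_div_assoc]; gcongr; norm_num

lemma mul_cos_inner_sub_one_le_of_mem_probeBall {σ : E → ℝ} {m r s t : ℝ} (hm : 0 ≤ m)
    (hs : 0 ≤ s) (hσ : ∀ p ∈ ball (0 : E) r, m * ‖p‖ ^ (-s) ≤ σ p) (ht : 0 < t) (ht1 : t ≤ 1)
    (htr : 2 * t < r) {p q : E} (hq : 1 ≤ ‖q‖) (hp : p ∈ probeBall q t) :
    σ p * (cos ⟪p, q⟫ - 1) ≤ -(m * (2 * t / ‖q‖) ^ (-s) * (2 / π ^ 2 * (t / 2) ^ 2)) := by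
  have hq0 : 0 < ‖q‖ := one_pos.trans_le hq
  have hq_ne : q ≠ 0 := norm_pos_iff.1 hq0
  obtain ⟨hlow, hup⟩ := inner_mem_Icc_of_mem_probeBall hq_ne hp
  have hpt := norm_le_of_mem_probeBall hq_ne ht.le hp
  have hp0 : 0 < ‖p‖ := by
    by_contra! h
    rw [norm_le_zero_iff.1 h, inner_zero_left] at hlow
    linarith
  have hcos : cos ⟪p, q⟫ - 1 ≤ -(2 / π ^ 2 * (t / 2) ^ 2) := by
    have := cos_le_one_sub_mul_cos_sq (x := ⟪p, q⟫)
      (abs_le.2 ⟨by linarith [pi_pos], by linarith [pi_gt_three]⟩)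
    have : (t / 2) ^ 2 ≤ ⟪p, q⟫ ^ 2 := pow_le_pow_left₀ (by positivity) hlow 2
    have : 0 ≤ 2 / π ^ 2 := by positivity
    nlinarith
  have hσp : m * (2 * t / ‖q‖) ^ (-s) ≤ σ p := by
    refine le_trans ?_ (hσ p (mem_ball_zero_iff.2 ?_))
    · exact mul_le_mul_of_nonneg_left (Real.rpow_le_rpow_of_nonpos hp0 hpt (neg_nonpos.2 hs)) hm
    · calc ‖p‖ ≤ 2 * t / ‖q‖ := hpt
        _ ≤ 2 * t := div_le_self (by positivity) hq
        _ < r := htr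
  have hκ : 0 ≤ 2 / π ^ 2 * (t / 2) ^ 2 := by positivity
  calc σ p * (cos ⟪p, q⟫ - 1) ≤ σ p * -(2 / π ^ 2 * (t / 2) ^ 2) :=
        mul_le_mul_of_nonneg_left hcos ((by positivity : 0 ≤ m * (2 * t / ‖q‖) ^ (-s)).trans hσp)
    _ ≤ m * (2 * t / ‖q‖) ^ (-s) * -(2 / π ^ 2 * (t / 2) ^ 2) :=
        mul_le_mul_of_nonpos_right hσp (neg_nonpos.2 hκ)
    _ = _ := by ring

variable [FiniteDimensional ℝ E] [MeasurableSpace E] [BorelSpace E] {μ : Measure E}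
  [μ.IsAddHaarMeasure]

theorem integrable_mul_cos_inner_sub_one (hd : 1 ≤ finrank ℝ E) {σ : E → ℝ} {C s : ℝ}
    (hs : finrank ℝ E < s) (hs2 : s < finrank ℝ E + 2) (hσ_meas : AEStronglyMeasurable σ μ)
    (hσ : ∀ᵐ p ∂μ, |σ p| ≤ C * ‖p‖ ^ (-s)) (q : E) :
    Integrable (fun p ↦ σ p * (cos ⟪p, q⟫ - 1)) μ := by
  have hmeas : AEStronglyMeasurable (fun p ↦ σ p * (cos ⟪p, q⟫ - 1)) μ :=
    hσ_meas.mul (by fun_prop : Continuous fun p : E ↦ cos ⟪p, q⟫ - 1).aestronglyMeasurable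
  have hball : IntegrableOn (fun p ↦ σ p * (cos ⟪p, q⟫ - 1)) (ball 0 1) μ := by
    refine integrableOn_ball_of_norm_le_rpow hd (C := C * (‖q‖ ^ 2 / 2)) (α := s - 2)
      (by linarith) (ae_restrict_of_ae ?_) hmeas
    have : Nontrivial E := Module.nontrivial_of_finrank_pos (R := ℝ) hd
    filter_upwards [hσ, Measure.ae_ne μ 0] with p hp hp0
    have hp0 := norm_pos_iff.2 hp0
    rw [norm_mul, Real.norm_eq_abs, Real.norm_eq_abs]
    calc |σ p| * |cos ⟪p, q⟫ - 1| ≤ C * ‖p‖ ^ (-s) * (‖q‖ ^ 2 / 2 * ‖p‖ ^ 2) :=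
          mul_le_mul hp (abs_cos_inner_sub_one_le p q) (abs_nonneg _) ((abs_nonneg _).trans hp)
      _ = C * (‖q‖ ^ 2 / 2) * ‖p‖ ^ (-(s - 2)) := by
          rw [neg_sub, sub_eq_neg_add, Real.rpow_add hp0, Real.rpow_two]
          ring
  have hcompl : IntegrableOn (fun p ↦ σ p * (cos ⟪p, q⟫ - 1)) (ball 0 1)ᶜ μ := by
    refine ((integrableOn_compl_ball_rpow_neg hs one_pos).const_mul (2 * C)).mono'
      hmeas.restrict (ae_restrict_of_ae ?_)
    filter_upwards [hσ] with p hp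
    have hcos : |cos ⟪p, q⟫ - 1| ≤ 2 := by
      rw [abs_le]; constructor <;> linarith [neg_one_le_cos ⟪p, q⟫, cos_le_one ⟪p, q⟫]
    rw [norm_mul, Real.norm_eq_abs, Real.norm_eq_abs]
    calc |σ p| * |cos ⟪p, q⟫ - 1| ≤ C * ‖p‖ ^ (-s) * 2 :=
          mul_le_mul hp hcos (abs_nonneg _) ((abs_nonneg _).trans hp)
      _ = 2 * C * ‖p‖ ^ (-s) := by ring
  simpa using hball.union hcompl

lemma measureReal_probeBall (q : E) {t : ℝ} (ht : 0 ≤ t) :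
    μ.real (probeBall q t) = (t / 2) ^ finrank ℝ E / ‖q‖ ^ finrank ℝ E * μ.real (ball 0 1) := by
  rw [probeBall, Measure.addHaar_real_closedBall μ _ (by positivity), div_mul_eq_div_div, div_pow]

theorem integral_mul_cos_inner_sub_one_le {σ : E → ℝ} {m r s : ℝ} (hσ_nonneg : ∀ p, 0 ≤ σ p)
    (hm : 0 < m) (hr : 0 < r) (hs : 0 ≤ s) (hσ : ∀ p ∈ ball (0 : E) r, m * ‖p‖ ^ (-s) ≤ σ p)
    (hint : ∀ q, Integrable (fun p ↦ σ p * (cos ⟪p, q⟫ - 1)) μ) :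
    ∃ c, 0 < c ∧ ∀ q : E, 1 ≤ ‖q‖ →
      ∫ p, σ p * (cos ⟪p, q⟫ - 1) ∂μ ≤ -c * ‖q‖ ^ (s - finrank ℝ E) := by
  set t := min (r / 4) 1
  have ht : 0 < t := lt_min (by positivity) one_pos
  have htr : 2 * t < r := by linarith [min_le_left (r / 4) 1]
  set κ := 2 / π ^ 2 * (t / 2) ^ 2
  have hB : 0 < μ.real (ball (0 : E) 1) :=
    ENNReal.toReal_pos (measure_ball_pos μ 0 one_pos).ne' measure_ball_lt_top.ne
  refine ⟨m * κ * μ.real (ball 0 1) * (t / 2) ^ finrank ℝ E * (2 * t) ^ (-s), by positivity,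
    fun q hq ↦ ?_⟩
  have hq0 : 0 < ‖q‖ := one_pos.trans_le hq
  have hS : μ.real (probeBall q t) * -(m * (2 * t / ‖q‖) ^ (-s) * κ) =
      -(m * κ * μ.real (ball 0 1) * (t / 2) ^ finrank ℝ E * (2 * t) ^ (-s)) *
        ‖q‖ ^ (s - finrank ℝ E) := by
    rw [measureReal_probeBall q ht.le, Real.div_rpow (by positivity) hq0.le,
      Real.rpow_neg hq0.le, Real.rpow_sub hq0, Real.rpow_natCast]
    field_simp
  calc ∫ p, σ p * (cos ⟪p, q⟫ - 1) ∂μ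
      ≤ ∫ p in probeBall q t, σ p * (cos ⟪p, q⟫ - 1) ∂μ :=
        integral_le_setIntegral_of_nonpos (hint q)
          (.of_forall fun p ↦ mul_nonpos_of_nonneg_of_nonpos (hσ_nonneg p)
            (sub_nonpos.2 (cos_le_one _))) _
    _ ≤ ∫ _ in probeBall q t, -(m * (2 * t / ‖q‖) ^ (-s) * κ) ∂μ :=
        setIntegral_mono_on (hint q).integrableOn
          (integrableOn_const measure_closedBall_lt_top.ne) measurableSet_closedBall
          (fun p hp ↦ mul_cos_inner_sub_one_le_of_mem_probeBall hm.le hs hσ ht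
            (min_le_right _ _) htr hq hp)
    _ = _ := by rw [setIntegral_const, smul_eq_mul, hS]

end InnerProductSpace

def scatteringKernel (d : ℕ) (θ : ℝ) (a : EuclideanSpace ℝ (Fin d) → ℝ)
    (p : EuclideanSpace ℝ (Fin d)) : ℝ :=
  2 * a p / ((2 * π) ^ d * ‖p‖ ^ ((d : ℝ) + θ))

section ScatteringKernel

variable {d : ℕ} {θ : ℝ} {a : EuclideanSpace ℝ (Fin d) → ℝ}

lemma scatteringKernel_eq (p : EuclideanSpace ℝ (Fin d)) :
    scatteringKernel d θ a p = 2 * a p / (2 * π) ^ d * ‖p‖ ^ (-((d : ℝ) + θ)) := by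
  rw [scatteringKernel, Real.rpow_neg (norm_nonneg p), div_mul_eq_div_div, div_eq_mul_inv]

lemma scatteringKernel_nonneg (ha : ∀ p, 0 ≤ a p) (p : EuclideanSpace ℝ (Fin d)) :
    0 ≤ scatteringKernel d θ a p := by
  have := ha p
  rw [scatteringKernel_eq]; positivity

lemma abs_scatteringKernel_le (ha : ∀ p, 0 ≤ a p) {A : ℝ} {p : EuclideanSpace ℝ (Fin d)}
    (hA : a p ≤ A) :
    |scatteringKernel d θ a p| ≤ 2 * A / (2 * π) ^ d * ‖p‖ ^ (-((d : ℝ) + θ)) := by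
  rw [abs_of_nonneg (scatteringKernel_nonneg ha p), scatteringKernel_eq]
  gcongr

lemma le_scatteringKernel {b : ℝ} {p : EuclideanSpace ℝ (Fin d)} (hb : b ≤ a p) :
    2 * b / (2 * π) ^ d * ‖p‖ ^ (-((d : ℝ) + θ)) ≤ scatteringKernel d θ a p := by
  rw [scatteringKernel_eq]
  gcongr

lemma measurable_scatteringKernel (ha : Measurable a) : Measurable (scatteringKernel d θ a) := by
  unfold scatteringKernel; fun_prop

end ScatteringKernel

/-- For the Lévy exponent `Ψ(q) = ∫ σ̃(p)(cos(p·q) − 1) dp` with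
`σ̃(p) = 2a(p)/((2π)^d |p|^{d+θ})`, `a ≥ 0` bounded continuous with `a 0 > 0` and `θ ∈ (0,1)`,
there is `c > 0` such that `Ψ(q) ≤ −c|q|^θ` whenever `|q| ≥ 1`. -/
theorem stmt15 (d : ℕ) (hd : 1 ≤ d) (θ : ℝ) (hθ : θ ∈ Set.Ioo (0 : ℝ) 1)
    (a : EuclideanSpace ℝ (Fin d) → ℝ) (ha_cont : Continuous a) (ha_nonneg : ∀ p, 0 ≤ a p)
    (ha_bdd : ∃ A : ℝ, ∀ p, a p ≤ A) (ha0 : 0 < a 0)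
    (Ψ : EuclideanSpace ℝ (Fin d) → ℝ)
    (hΨ : ∀ q, Ψ q = ∫ p : EuclideanSpace ℝ (Fin d),
      (2 * a p / ((2 * π) ^ (d : ℕ) * ‖p‖ ^ ((d : ℝ) + θ))) * (Real.cos ⟪p, q⟫ - 1)) :
    ∃ c : ℝ, 0 < c ∧ ∀ q : EuclideanSpace ℝ (Fin d), 1 ≤ ‖q‖ → Ψ q ≤ -c * ‖q‖ ^ θ := by
  obtain ⟨A, hA⟩ := ha_bdd
  obtain ⟨hθ0, hθ1⟩ := hθ
  have hdim : finrank ℝ (EuclideanSpace ℝ (Fin d)) = d := finrank_euclideanSpace_fin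
  obtain ⟨r, hr, har⟩ := Metric.eventually_nhds_iff_ball.1
    (ha_cont.continuousAt.eventually (Ici_mem_nhds (half_lt_self ha0)))
  have hint (q : EuclideanSpace ℝ (Fin d)) :
      Integrable (fun p ↦ scatteringKernel d θ a p * (cos ⟪p, q⟫ - 1)) :=
    integrable_mul_cos_inner_sub_one (by rw [hdim]; exact hd) (by rw [hdim]; linarith)
      (by rw [hdim]; linarith)
      (measurable_scatteringKernel ha_cont.measurable).aestronglyMeasurable
      (.of_forall fun p ↦ abs_scatteringKernel_le ha_nonneg (hA p)) q
  obtain ⟨c, hc, hΨc⟩ := integral_mul_cos_inner_sub_one_le (scatteringKernel_nonneg ha_nonneg)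
    (by positivity : 0 < 2 * (a 0 / 2) / (2 * π) ^ d) hr (by positivity)
    (fun p hp ↦ le_scatteringKernel (har p hp)) hint
  refine ⟨c, hc, fun q hq ↦ ?_⟩
  have hbound := hΨc q hq
  rw [hdim, add_sub_cancel_left] at hbound
  exact (hΨ q).trans_le hbound
end
end
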